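/- Let b ≥ 1 and let T be a tree rooted at the burned vertex s. If Φ is a valid budget-b strategy saving a set W of vertices, then there exists a valid budget-b strategy Φ' saving a superset of W such that every vertex protected by Φ' at time step t is at distance exactly t from s. -/
import Mathlib


/-- `burnedSet G s φ t` is the set of vertices of `G` burned at time `t` in the firefighting
process where `s` is burned at time `0` and `φ t'` is the set of vertices protected at time
step `t'`: at each step the fire spreads from every burned vertex to each of its neighbors
that has not been protected at any time step so far. -/
def burnedSet {V : Type} (G : SimpleGraph V) (s : V) (φ : ℕ → Finset V) : ℕ → Set V
  | 0 => {s}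
  | t + 1 => burnedSet G s φ t ∪
      {w | (∃ v ∈ burnedSet G s φ t, G.Adj v w) ∧ ∀ t' ≤ t + 1, w ∉ φ t'}

/-- A strategy is valid with respect to budget `b` if no vertex is protected at time `0`,
at most `b` vertices are protected at each time step, and a vertex protected at time `t+1`
is not burned at time `t`. -/
def validStrategy {V : Type} (G : SimpleGraph V) (s : V) (b : ℕ) (φ : ℕ → Finset V) : Prop :=
  φ 0 = ∅ ∧ (∀ t, (φ t).card ≤ b) ∧ ∀ t v, v ∈ φ (t + 1) → v ∉ burnedSet G s φ t

/-- A vertex is saved if it is never burned. -/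
def savedBy {V : Type} (G : SimpleGraph V) (s : V) (φ : ℕ → Finset V) (v : V) : Prop :=
  ∀ t, v ∉ burnedSet G s φ t


open SimpleGraph

namespace FF

variable {V : Type} {G : SimpleGraph V}

/-- `u` lies on the geodesic from `s` to `v` (metric betweenness). -/
def Anc (G : SimpleGraph V) (s u v : V) : Prop :=
  G.dist s u + G.dist u v = G.dist s v

lemma anc_refl (s v : V) : Anc G s v v := by simp [Anc]

lemma anc_self (s : V) : Anc G s s v := by simp [Anc]

lemma adj_dist_one (h : G.Adj u v) : G.dist u v = 1 :=
  SimpleGraph.dist_eq_one_iff_adj.mpr h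

lemma anc_trans (hc : G.Connected) {s u v x : V}
    (h1 : Anc G s u v) (h2 : Anc G s x u) : Anc G s x v := by
  unfold Anc at *
  have t1 : G.dist x v ≤ G.dist x u + G.dist u v := hc.dist_triangle
  have t2 : G.dist s v ≤ G.dist s x + G.dist x v := hc.dist_triangle
  omega

lemma parent_exists (hc : G.Connected) {s v : V} (hv : G.dist s v ≠ 0) :
    ∃ u, G.Adj u v ∧ G.dist s u + 1 = G.dist s v := by
  obtain ⟨p, hp⟩ := hc.exists_walk_length_eq_dist v s
  have hvs : v ≠ s := by
    intro h; subst h; simp [SimpleGraph.dist_self] at hv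
  obtain ⟨x, hadj, q, rfl⟩ := Walk.exists_eq_cons_of_ne hvs p
  refine ⟨x, hadj.symm, ?_⟩
  have hq : G.dist s x ≤ q.length := by
    have := SimpleGraph.dist_le q.reverse
    simpa [Walk.length_reverse] using this
  have h2 : G.dist s v ≤ G.dist s x + 1 := by
    have := hc.dist_triangle (u := s) (v := x) (w := v)
    rw [adj_dist_one hadj.symm] at this
    exact this
  have h3 : q.length + 1 = G.dist v s := by simpa using hp
  rw [SimpleGraph.dist_comm] at h3
  omega

lemma anc_exists (hc : G.Connected) (s : V) :
    ∀ (k : ℕ) (v : V), k ≤ G.dist s v →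
      ∃ u, G.dist s u = G.dist s v - k ∧ Anc G s u v := by
  intro k
  induction k with
  | zero => intro v _; exact ⟨v, by simp, anc_refl s v⟩
  | succ k ih =>
    intro v hk
    obtain ⟨u, hu1, hu2⟩ := ih v (by omega)
    have hu0 : G.dist s u ≠ 0 := by omega
    obtain ⟨w, hadj, hw⟩ := parent_exists hc hu0
    have hancwu : Anc G s w u := by
      unfold Anc; rw [adj_dist_one hadj]; omega
    exact ⟨w, by omega, anc_trans hc hu2 hancwu⟩

lemma anc_at (hc : G.Connected) {s v : V} {t : ℕ} (ht : t ≤ G.dist s v) :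
    ∃ u, G.dist s u = t ∧ Anc G s u v := by
  obtain ⟨u, h1, h2⟩ := anc_exists hc s (G.dist s v - t) v (by omega)
  exact ⟨u, by omega, h2⟩

lemma tree_adj_dist_ne [DecidableEq V] (hG : G.IsTree) (s : V) {v w : V} (h : G.Adj v w) :
    G.dist s v ≠ G.dist s w := by
  intro heq
  obtain ⟨p, hp, hpl⟩ := (hG.isConnected s v).exists_path_of_dist
  by_cases hw : w ∈ p.support
  · have hspec := Walk.take_spec p hw
    have hlen : (p.takeUntil w hw).length + (p.dropUntil w hw).length = p.length := by
      conv_rhs => rw [← hspec]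
      rw [Walk.length_append]
    have h1 : G.dist s w ≤ (p.takeUntil w hw).length := SimpleGraph.dist_le _
    have h2 : G.dist w v ≤ (p.dropUntil w hw).length := SimpleGraph.dist_le _
    have h3 : G.dist w v = 1 := adj_dist_one h.symm
    omega
  · have hpc : (p.concat h).IsPath := by
      rw [← Walk.isPath_reverse_iff, Walk.reverse_concat]
      refine (hp.reverse).cons ?_
      simpa [Walk.support_reverse] using hw
    obtain ⟨q, hq, hql⟩ := (hG.isConnected s w).exists_path_of_dist
    have := hG.IsAcyclic.path_unique ⟨q, hq⟩ ⟨p.concat h, hpc⟩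
    have hwl : q.length = (p.concat h).length := by
      rw [Subtype.ext_iff] at this
      simp only at this
      rw [this]
    rw [Walk.length_concat] at hwl
    omega

lemma tree_anc_parent (hG : G.IsTree) {s u v w : V} (h : G.Adj v w)
    (hd : G.dist s v + 1 = G.dist s w) (hu : Anc G s u w) (hne : u ≠ w) :
    Anc G s u v := by
  have hc := hG.isConnected
  obtain ⟨p, hpl⟩ := hc.exists_walk_length_eq_dist s u
  obtain ⟨q, hql⟩ := hc.exists_walk_length_eq_dist u w
  have hP1l : (p.append q).length = G.dist s w := by
    rw [Walk.length_append, hpl, hql]; exact hu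
  have hP1 : (p.append q).IsPath := (p.append q).isPath_of_length_eq_dist (by rw [hP1l])
  obtain ⟨r, hrl⟩ := hc.exists_walk_length_eq_dist s v
  have hP2l : (r.concat h).length = G.dist s w := by
    rw [Walk.length_concat, hrl]; exact hd
  have hP2 : (r.concat h).IsPath := (r.concat h).isPath_of_length_eq_dist (by rw [hP2l])
  have heq : p.append q = r.concat h := by
    have := hG.IsAcyclic.path_unique ⟨p.append q, hP1⟩ ⟨r.concat h, hP2⟩
    exact Subtype.ext_iff.mp this
  -- reverse both sides
  have hrev : q.reverse.append p.reverse = Walk.cons h.symm r.reverse := by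
    have := congrArg Walk.reverse heq
    rwa [Walk.reverse_append, Walk.reverse_concat] at this
  have hwu : w ≠ u := hne.symm
  obtain ⟨x, hadj, q0, hq0⟩ := Walk.exists_eq_cons_of_ne hwu q.reverse
  rw [hq0, Walk.cons_append] at hrev
  have hxv : x = v := by
    have := congrArg (fun z => Walk.getVert z 1) hrev
    simpa [Walk.getVert_cons_succ, Walk.getVert_zero] using this
  have hq0l : q0.length + 1 = G.dist u w := by
    have := congrArg Walk.length hq0
    rw [Walk.length_reverse, Walk.length_cons] at this
    omega
  have hdux : G.dist u x ≤ q0.length := by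
    have := SimpleGraph.dist_le q0.reverse
    rwa [Walk.length_reverse] at this
  have hduv : G.dist u v ≤ q0.length := hxv ▸ hdux
  have htri : G.dist s v ≤ G.dist s u + G.dist u v := hc.dist_triangle
  unfold Anc at *
  omega

end FF

section Main

open SimpleGraph FF

variable {V : Type}

/-- A vertex `v` is blocked if some vertex `u` on the geodesic from `s` to `v` is protected
at some time step `t' ≤ dist s u` (i.e. before the fire would reach `u`). -/
def Blocked (G : SimpleGraph V) (s : V) (φ : ℕ → Finset V) (v : V) : Prop :=
  ∃ u, Anc G s u v ∧ ∃ t' ≤ G.dist s u, u ∈ φ t'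

lemma not_blocked_root {G : SimpleGraph V} (hc : G.Connected) (s : V) {φ : ℕ → Finset V}
    (hφ0 : φ 0 = ∅) : ¬ Blocked G s φ s := by
  rintro ⟨u, hanc, t', ht', hu⟩
  have h0 : G.dist s u = 0 := by
    have := hanc
    unfold Anc at this
    have hss : G.dist s s = 0 := SimpleGraph.dist_self
    omega
  have : u ∈ φ 0 := by
    have : t' = 0 := by omega
    rwa [this] at hu
  simp [hφ0] at this

lemma burned_iff [DecidableEq V] {G : SimpleGraph V} (hG : G.IsTree) (s : V)
    (φ : ℕ → Finset V) (hφ0 : φ 0 = ∅) :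
    ∀ t v, v ∈ burnedSet G s φ t ↔ G.dist s v ≤ t ∧ ¬ Blocked G s φ v := by
  have hc := hG.isConnected
  intro t
  induction t with
  | zero =>
    intro v
    simp only [burnedSet, Set.mem_singleton_iff, Nat.le_zero]
    constructor
    · rintro rfl
      exact ⟨SimpleGraph.dist_self, not_blocked_root hc _ hφ0⟩
    · rintro ⟨hd, -⟩
      exact ((hc.dist_eq_zero_iff).mp hd).symm
  | succ t ih =>
    intro v
    simp only [burnedSet, Set.mem_union, Set.mem_setOf_eq]
    constructor
    · rintro (hv | ⟨⟨x, hx, hadj⟩, hprot⟩)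
      · obtain ⟨h1, h2⟩ := (ih v).mp hv
        exact ⟨h1.trans (Nat.le_succ t), h2⟩
      · obtain ⟨hdx, hbx⟩ := (ih x).mp hx
        have hxv1 : G.dist x v = 1 := adj_dist_one hadj
        have htr1 : G.dist s v ≤ G.dist s x + G.dist x v := hc.dist_triangle
        have htr2 : G.dist s x ≤ G.dist s v + G.dist v x := hc.dist_triangle
        have hvx1 : G.dist v x = 1 := adj_dist_one hadj.symm
        have hne := tree_adj_dist_ne hG s hadj
        refine ⟨by omega, ?_⟩
        rintro ⟨u, hanc, t', ht', hu⟩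
        rcases lt_or_gt_of_ne hne with hlt | hgt
        · have hdv : G.dist s x + 1 = G.dist s v := by omega
          by_cases huv : u = v
          · subst huv
            exact hprot t' (by omega) hu
          · exact hbx ⟨u, tree_anc_parent hG hadj hdv hanc huv, t', ht', hu⟩
        · have hanc_vx : Anc G s v x := by
            unfold Anc; omega
          exact hbx ⟨u, anc_trans hc hanc_vx hanc, t', ht', hu⟩
    · rintro ⟨hd, hb⟩
      rcases Nat.lt_or_ge (G.dist s v) (t + 1) with hlt | hge
      · exact Or.inl ((ih v).mpr ⟨by omega, hb⟩)
      · have hdv : G.dist s v = t + 1 := by omega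
        obtain ⟨x, hadj, hx⟩ := parent_exists hc (s := s) (v := v) (by omega)
        have hbx : ¬ Blocked G s φ x := by
          rintro ⟨u, hanc, t', ht', hu⟩
          have hxv : Anc G s x v := by
            unfold Anc; rw [adj_dist_one hadj]; omega
          exact hb ⟨u, anc_trans hc hxv hanc, t', ht', hu⟩
        have hxmem : x ∈ burnedSet G s φ t := (ih x).mpr ⟨by omega, hbx⟩
        refine Or.inr ⟨⟨x, hxmem, hadj⟩, ?_⟩
        intro t' ht' hu
        exact hb ⟨v, anc_refl s v, t', by omega, hu⟩

end Main

/-- Normalization lemma: on a tree rooted at the burned vertex `s`, any valid budget-`b`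
strategy `Φ` saving a set `W` of vertices can be replaced by a valid budget-`b` strategy
`Φ'` saving a superset of `W` such that every vertex protected by `Φ'` at time step `t` is
at distance exactly `t` from `s`. -/
theorem stmt12 {V : Type} [Fintype V] [DecidableEq V] (G : SimpleGraph V) [DecidableRel G.Adj]
    (hG : G.IsTree) (s : V) (b : ℕ) (hb : 1 ≤ b)
    (φ : ℕ → Finset V) (hφ : validStrategy G s b φ) :
    ∃ φ' : ℕ → Finset V, validStrategy G s b φ' ∧
      (∀ w, savedBy G s φ w → savedBy G s φ' w) ∧
      ∀ t v, v ∈ φ' t → G.dist s v = t := by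
  classical
  have hc := hG.isConnected
  obtain ⟨hφ0, hφb, hφv⟩ := hφ
  have hex : ∀ (t : ℕ) (v : V), ∃ u, t ≤ G.dist s v → (G.dist s u = t ∧ FF.Anc G s u v) := by
    intro t v
    by_cases h : t ≤ G.dist s v
    · obtain ⟨u, h1, h2⟩ := FF.anc_at hc h
      exact ⟨u, fun _ => ⟨h1, h2⟩⟩
    · exact ⟨v, fun hh => absurd hh h⟩
  choose f hf using hex
  set φ' : ℕ → Finset V := fun t => ((φ t).filter (fun v => t ≤ G.dist s v)).image (f t)
    with hφ'def
  have hφ'0 : φ' 0 = ∅ := by simp [hφ'def, hφ0]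
  have hdistφ' : ∀ t v, v ∈ φ' t → G.dist s v = t := by
    intro t v hv
    simp only [hφ'def, Finset.mem_image, Finset.mem_filter] at hv
    obtain ⟨w, ⟨hw1, hw2⟩, rfl⟩ := hv
    exact (hf t w hw2).1
  have hBiff := burned_iff hG s φ hφ0
  have hBiff' := burned_iff hG s φ' hφ'0
  refine ⟨φ', ⟨hφ'0, ?_, ?_⟩, ?_, hdistφ'⟩
  · intro t
    calc (φ' t).card ≤ ((φ t).filter (fun v => t ≤ G.dist s v)).card :=
          Finset.card_image_le
      _ ≤ (φ t).card := Finset.card_filter_le _ _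
      _ ≤ b := hφb t
  · intro t v hv
    have hd := hdistφ' (t + 1) v hv
    intro hmem
    have := ((hBiff' t v).mp hmem).1
    omega
  · intro w hw
    have hbw : Blocked G s φ w := by
      by_contra hB
      exact hw (G.dist s w) ((hBiff (G.dist s w) w).mpr ⟨le_refl _, hB⟩)
    obtain ⟨u, hanc, t', ht', hu⟩ := hbw
    have hfu := hf t' u ht'
    have hbw' : Blocked G s φ' w := by
      refine ⟨f t' u, FF.anc_trans hc hanc hfu.2, t', le_of_eq hfu.1.symm, ?_⟩
      simp only [hφ'def, Finset.mem_image, Finset.mem_filter]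
      exact ⟨u, ⟨hu, ht'⟩, rfl⟩
    intro t hmem
    exact ((hBiff' t w).mp hmem).2 hbw'
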